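/- arXiv:2511.09285 — 2 statements merged into one kernel-verified Lean document; each statement's English description precedes it below -/
import Mathlib

section
/- Let f : ℝ → ℝ be continuous with f(0) = 0, f continuously differentiable on (0,∞) with f'(t) ≥ 0 for t > 0, and suppose there exists θ > 2 such that 0 < θ·F(t) ≤ f(t)·t² for all t > 0, where F(t) = ∫₀ᵗ f(s)·s ds. Then there exist constants A, B > 0 such that F(t) ≥ A·t^θ − B·t² for all t ≥ 0. -/
/-!
Under the Ambrosetti–Rabinowitz condition `θ F(t) ≤ t F'(t)`, the quotient `F(t) / t^θ` has
nonnegative derivative `(t F'(t) - θ F(t)) t^(-θ-1)`, so `F(t) ≥ F(1) t^θ` for `t ≥ 1`.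
For `0 < t ≤ 1` one has `t^θ ≤ t²` since `θ ≥ 2`, so `F(1) (t^θ - t²) ≤ 0 < F(t)`.
Hence `A = B = F(1)` works.
-/

open Set

theorem hasDerivAt_mul_rpow_neg {F : ℝ → ℝ} {F' θ t : ℝ} (hF : HasDerivAt F F' t) (ht : 0 < t) :
    HasDerivAt (fun x => F x * x ^ (-θ)) ((t * F' - θ * F t) * t ^ (-θ - 1)) t := by
  refine (hF.mul (Real.hasDerivAt_rpow_const (p := -θ) (Or.inl ht.ne'))).congr_deriv ?_
  rw [show -θ = 1 + (-θ - 1) by ring, Real.rpow_add ht, Real.rpow_one]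
  ring_nf

theorem monotoneOn_mul_rpow_neg {F F' : ℝ → ℝ} {θ : ℝ}
    (hF : ∀ t > 0, HasDerivAt F (F' t) t) (hAR : ∀ t > 0, θ * F t ≤ t * F' t) :
    MonotoneOn (fun t => F t * t ^ (-θ)) (Ioi 0) := by
  have hderiv (t : ℝ) (ht : 0 < t) := hasDerivAt_mul_rpow_neg (θ := θ) (hF t ht) ht
  refine monotoneOn_of_hasDerivWithinAt_nonneg (f' := fun t => (t * F' t - θ * F t) * t ^ (-θ - 1))
    (convex_Ioi 0)
    (fun t ht => (hderiv t ht).continuousAt.continuousWithinAt) (fun t ht => ?_) (fun t ht => ?_)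
  · rw [interior_Ioi] at ht ⊢
    exact (hderiv t ht).hasDerivWithinAt
  · rw [interior_Ioi] at ht
    exact mul_nonneg (sub_nonneg.2 (hAR t ht)) (Real.rpow_nonneg ht.le _)

theorem mul_rpow_le_of_one_le {F F' : ℝ → ℝ} {θ t : ℝ}
    (hF : ∀ t > 0, HasDerivAt F (F' t) t) (hAR : ∀ t > 0, θ * F t ≤ t * F' t) (ht : 1 ≤ t) :
    F 1 * t ^ θ ≤ F t := by
  have ht0 : 0 < t := one_pos.trans_le ht
  have hmono := monotoneOn_mul_rpow_neg hF hAR (mem_Ioi.2 one_pos) (mem_Ioi.2 ht0) ht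
  simp only [Real.one_rpow, mul_one, Real.rpow_neg ht0.le] at hmono
  exact (le_mul_inv_iff₀ (Real.rpow_pos_of_pos ht0 θ)).1 hmono

theorem mul_rpow_sub_mul_sq_le {F F' : ℝ → ℝ} {θ : ℝ} (hθ : 2 ≤ θ)
    (hF : ∀ t > 0, HasDerivAt F (F' t) t) (hAR : ∀ t > 0, θ * F t ≤ t * F' t)
    (hF_nonneg : ∀ t ≥ 0, 0 ≤ F t) {t : ℝ} (ht : 0 ≤ t) :
    F 1 * t ^ θ - F 1 * t ^ 2 ≤ F t := by
  have hF1 := hF_nonneg 1 zero_le_one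
  rcases ht.eq_or_lt with rfl | ht0
  · simpa [Real.zero_rpow (by linarith : θ ≠ 0)] using hF_nonneg 0 le_rfl
  rcases le_or_gt t 1 with ht1 | ht1
  · have hle : t ^ θ ≤ t ^ (2 : ℝ) := Real.rpow_le_rpow_of_exponent_ge ht0 ht1 hθ
    rw [Real.rpow_two] at hle
    nlinarith [hF_nonneg t ht]
  · nlinarith [mul_rpow_le_of_one_le hF hAR ht1.le, sq_nonneg t]

theorem stmt_0_general (f F : ℝ → ℝ) (θ : ℝ)
    (hf_cont : Continuous f)
    (hθ : 2 < θ)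
    (hF : ∀ t : ℝ, F t = ∫ s in (0:ℝ)..t, f s * s)
    (hAR : ∀ t > (0:ℝ), 0 < θ * F t ∧ θ * F t ≤ f t * t ^ 2) :
    ∃ A > (0:ℝ), ∃ B > (0:ℝ), ∀ t ≥ (0:ℝ), F t ≥ A * t ^ θ - B * t ^ 2 := by
  have hF_eq : F = fun t => ∫ s in (0:ℝ)..t, f s * s := funext hF
  have hderiv (t : ℝ) : HasDerivAt F (f t * t) t := by
    rw [hF_eq]
    exact ((hf_cont.mul continuous_id).integral_hasStrictDerivAt 0 t).hasDerivAt
  have hpos (t : ℝ) (ht : 0 < t) : 0 < F t :=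
    pos_of_mul_pos_right (hAR t ht).1 (by linarith)
  have hF_nonneg (t : ℝ) (ht : 0 ≤ t) : 0 ≤ F t := by
    rcases ht.eq_or_lt with rfl | ht0
    · simp [hF]
    · exact (hpos t ht0).le
  have hAR' (t : ℝ) (ht : 0 < t) : θ * F t ≤ t * (f t * t) := by
    linarith [(hAR t ht).2]
  exact ⟨F 1, hpos 1 one_pos, F 1, hpos 1 one_pos, fun t ht =>
    mul_rpow_sub_mul_sq_le hθ.le (fun t _ => hderiv t) hAR' hF_nonneg ht⟩

/-- Under the Ambrosetti–Rabinowitz condition there exist `A, B > 0`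
with `F t ≥ A t^θ - B t^2` for all `t ≥ 0`. -/
theorem stmt_0 (f F : ℝ → ℝ) (θ : ℝ)
    (hf_cont : Continuous f) (hf0 : f 0 = 0)
    (hf_diff : ContDiffOn ℝ 1 f (Set.Ioi 0))
    (hf_deriv : ∀ t > (0:ℝ), 0 ≤ deriv f t)
    (hθ : 2 < θ)
    (hF : ∀ t : ℝ, F t = ∫ s in (0:ℝ)..t, f s * s)
    (hAR : ∀ t > (0:ℝ), 0 < θ * F t ∧ θ * F t ≤ f t * t ^ 2) :
    ∃ A > (0:ℝ), ∃ B > (0:ℝ), ∀ t ≥ (0:ℝ), F t ≥ A * t ^ θ - B * t ^ 2 :=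
  stmt_0_general f F θ hf_cont hθ hF hAR
end

section
/- Let f : [0,∞) → ℝ be continuous, nondecreasing, with f(0) = 0, and suppose there exists θ > 2 such that 0 < θ·F(t) ≤ f(t)·t² for all t > 0, where F(t) = ∫₀ᵗ f(s)s ds. Then for all vectors u, v ∈ ℂ² with v ≠ 0 and all t ≥ 1: Re[f(|u|)·u·conj((t²/2)u − (1/2)u + t·v)] + F(|u|) − F(|t·u + v|) < 0. -/
/-!
Since `f` is nondecreasing on `[0, ∞)`, `F b - F a = ∫ s in a..b, f s * s ≥ f a * (b² - a²) / 2`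
for all `a, b ≥ 0`. With `a = ‖u‖`, `b = ‖t • u + v‖` and
`‖t • u + v‖² - ‖u‖² = 2 Re ⟪(t²/2) u - u/2 + t v, u⟫ + ‖v‖²`, the expression is at most
`-f ‖u‖ * ‖v‖² / 2`, which is negative because the Ambrosetti–Rabinowitz condition forces `f > 0`
on `(0, ∞)`. For `u = 0` the expression is `-F ‖v‖ < 0`.
-/

open intervalIntegral in
theorem mul_sq_sub_sq_div_two_le_integral_mul_id {f : ℝ → ℝ} (hf : Continuous f)
    (hf_mono : MonotoneOn f (Set.Ici 0)) {a b : ℝ} (ha : 0 ≤ a) (hb : 0 ≤ b) :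
    f a * (b ^ 2 - a ^ 2) / 2 ≤ ∫ s in a..b, f s * s := by
  have hgap : ∫ s in a..b, (f s - f a) * s
      = (∫ s in a..b, f s * s) - f a * (b ^ 2 - a ^ 2) / 2 := by
    simp only [sub_mul]
    rw [integral_sub ((by fun_prop : Continuous fun s => f s * s).intervalIntegrable a b)
      ((by fun_prop : Continuous fun s => f a * s).intervalIntegrable a b), integral_const_mul,
      integral_id]
    ring
  suffices 0 ≤ ∫ s in a..b, (f s - f a) * s by linarith
  rcases le_total a b with hab | hba
  · refine integral_nonneg hab fun s hs => mul_nonneg ?_ (ha.trans hs.1)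
    exact sub_nonneg.2 (hf_mono ha (ha.trans hs.1) hs.1)
  · rw [integral_symm, ← integral_neg]
    refine integral_nonneg hba fun s hs => neg_nonneg.2 ?_
    exact mul_nonpos_of_nonpos_of_nonneg (sub_nonpos.2 (hf_mono (hb.trans hs.1) ha hs.2))
      (hb.trans hs.1)

section RealScalars

variable {𝕜 E : Type*} [RCLike 𝕜] [SeminormedAddCommGroup E] [InnerProductSpace 𝕜 E]
  [NormedSpace ℝ E] [IsScalarTower ℝ 𝕜 E]

theorem re_inner_smul_real_left (r : ℝ) (x y : E) :
    RCLike.re (inner 𝕜 (r • x) y) = r * RCLike.re (inner 𝕜 x y) := by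
  rw [← algebraMap_smul 𝕜 r x, RCLike.algebraMap_eq_ofReal, inner_smul_real_left, RCLike.smul_re]

theorem norm_smul_add_sq_sub_norm_sq (t : ℝ) (u v : E) :
    ‖t • u + v‖ ^ 2 - ‖u‖ ^ 2
      = 2 * RCLike.re (inner 𝕜 ((t ^ 2 / 2) • u - (1 / 2 : ℝ) • u + t • v) u) + ‖v‖ ^ 2 := by
  rw [norm_add_sq (𝕜 := 𝕜), norm_smul, inner_add_left, inner_sub_left, map_add, map_sub]
  simp only [re_inner_smul_real_left, inner_self_eq_norm_sq, Real.norm_eq_abs, mul_pow, sq_abs]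
  rw [inner_re_symm]
  ring

end RealScalars

theorem stmt_6_general (f F : ℝ → ℝ) (θ : ℝ)
    (hf_cont : Continuous f)
    (hf_mono : MonotoneOn f (Set.Ici (0:ℝ)))
    (hθ : 2 < θ)
    (hF : ∀ t : ℝ, F t = ∫ s in (0:ℝ)..t, f s * s)
    (hAR : ∀ t > (0:ℝ), 0 < θ * F t ∧ θ * F t ≤ f t * t ^ 2) :
    ∀ (u v : EuclideanSpace ℂ (Fin 2)), v ≠ 0 → ∀ t ≥ (1:ℝ),
      f ‖u‖ * (inner ℂ ((t ^ 2 / 2) • u - (1 / 2 : ℝ) • u + t • v) u : ℂ).re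
        + F ‖u‖ - F ‖t • u + v‖ < 0 := by
  intro u v hv t ht
  have hv_pos : 0 < ‖v‖ := norm_pos_iff.2 hv
  rcases (norm_nonneg u).eq_or_lt with hu | hu
  · have hu0 : u = 0 := norm_eq_zero.1 hu.symm
    have hFv : 0 < F ‖v‖ := pos_of_mul_pos_right (hAR ‖v‖ hv_pos).1 (by linarith)
    simpa [hu0, hF 0] using hFv
  · have hfu : 0 < f ‖u‖ :=
      pos_of_mul_pos_left ((hAR ‖u‖ hu).1.trans_le (hAR ‖u‖ hu).2) (sq_nonneg _)
    have hFdiff : F ‖t • u + v‖ - F ‖u‖ = ∫ s in ‖u‖..‖t • u + v‖, f s * s := by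
      have hint (x y : ℝ) : IntervalIntegrable (fun s => f s * s) MeasureTheory.volume x y :=
        (by fun_prop : Continuous fun s => f s * s).intervalIntegrable x y
      rw [hF, hF, intervalIntegral.integral_interval_sub_left (hint _ _) (hint _ _)]
    have hgrowth := mul_sq_sub_sq_div_two_le_integral_mul_id hf_cont hf_mono (norm_nonneg u)
      (norm_nonneg (t • u + v))
    rw [← hFdiff, norm_smul_add_sq_sub_norm_sq (𝕜 := ℂ), RCLike.re_to_complex] at hgrowth
    nlinarith [mul_pos hfu (pow_pos hv_pos 2)]

/-- Lemma 3.2 of the paper: for all `u v : ℂ²`, `v ≠ 0`, `t ≥ 1`,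
`Re[f(|u|) u · conj((t²/2)u - (1/2)u + t v)] + F(|u|) - F(|t u + v|) < 0`.
Here `u · conj w = ⟪w, u⟫` in Mathlib's convention (conjugate-linear in the
first slot). -/
theorem stmt_6 (f F : ℝ → ℝ) (θ : ℝ)
    (hf_cont : Continuous f) (hf0 : f 0 = 0)
    (hf_mono : MonotoneOn f (Set.Ici (0:ℝ)))
    (hθ : 2 < θ)
    (hF : ∀ t : ℝ, F t = ∫ s in (0:ℝ)..t, f s * s)
    (hAR : ∀ t > (0:ℝ), 0 < θ * F t ∧ θ * F t ≤ f t * t ^ 2) :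
    ∀ (u v : EuclideanSpace ℂ (Fin 2)), v ≠ 0 → ∀ t ≥ (1:ℝ),
      f ‖u‖ * (inner ℂ ((t ^ 2 / 2) • u - (1 / 2 : ℝ) • u + t • v) u : ℂ).re
        + F ‖u‖ - F ‖t • u + v‖ < 0 :=
  stmt_6_general f F θ hf_cont hf_mono hθ hF hAR
end
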